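/- (Sub-exponential decay in the obstacle, L∞-in-time form.) Let u be a classical solution of ∂ₜu = Δu − λu on (0,∞) × Ω₀ with λ > 0, extended continuously to t = 0, with u(0,x) = 0 for every x ∈ Ω₀, and set M := sup_{t ≥ 0} ∫_{Ω₀} u(t,x)² dx < ∞. Let K ⊆ Ω₀ be compact, a > 0 with the closed a-neighbourhood K_a contained in Ω₀, and let 0 < γ < 1 and 0 < ν < 1/2. Then for every λ ≥ max(1, (16e/(γ²a²))^{1/(1−2ν)}) one has sup_{t ≥ 0} ∫_K u(t,x)² dx ≤ e^{−λ^ν} · M. -/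

import Mathlib

open MeasureTheory

/-- The Laplacian of `f : ℝ^m → ℝ`, as the sum of the second partial derivatives
in the coordinate directions. -/
noncomputable def laplacian {m : ℕ} (f : EuclideanSpace ℝ (Fin m) → ℝ)
    (x : EuclideanSpace ℝ (Fin m)) : ℝ :=
  ∑ i : Fin m,
    fderiv ℝ (fun y => fderiv ℝ f y (EuclideanSpace.single i 1)) x (EuclideanSpace.single i 1)

/-- `u : ℝ × ℝ^m → ℝ` is a classical solution of `∂ₜ u = Δu − λ u` on `(0,∞) × Ω₀`:
it is continuous on `[0,∞) × Ω₀` (i.e. extends continuously to `t = 0`), has continuous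
derivatives `∂ₜu`, `∇ₓu`, `∇ₓ²u` on `(0,∞) × Ω₀`, satisfies the equation pointwise there,
`u(t,·)`, `∇ₓu(t,·)` are square-integrable on `Ω₀` for each `t`, and
`t ↦ ‖u(t)‖_{L²(Ω₀)}` is bounded. -/
structure IsClassicalSolution {m : ℕ} (Ω₀ : Set (EuclideanSpace ℝ (Fin m)))
    (lam : ℝ) (u : ℝ → EuclideanSpace ℝ (Fin m) → ℝ) : Prop where
  cont : ContinuousOn (fun p : ℝ × EuclideanSpace ℝ (Fin m) => u p.1 p.2)
      (Set.Ici 0 ×ˢ Ω₀)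
  diff_t : ∀ t ∈ Set.Ioi (0:ℝ), ∀ x ∈ Ω₀, DifferentiableAt ℝ (fun s => u s x) t
  diff_x : ∀ t ∈ Set.Ioi (0:ℝ), ∀ x ∈ Ω₀, DifferentiableAt ℝ (u t) x
  diff_xx : ∀ t ∈ Set.Ioi (0:ℝ), ∀ x ∈ Ω₀,
      DifferentiableAt ℝ (fun y => fderiv ℝ (u t) y) x
  cont_dt : ContinuousOn (fun p : ℝ × EuclideanSpace ℝ (Fin m) =>
      deriv (fun s => u s p.2) p.1) (Set.Ioi 0 ×ˢ Ω₀)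
  cont_grad : ContinuousOn (fun p : ℝ × EuclideanSpace ℝ (Fin m) =>
      fderiv ℝ (u p.1) p.2) (Set.Ioi 0 ×ˢ Ω₀)
  cont_hess : ContinuousOn (fun p : ℝ × EuclideanSpace ℝ (Fin m) =>
      fderiv ℝ (fun y => fderiv ℝ (u p.1) y) p.2) (Set.Ioi 0 ×ˢ Ω₀)
  eqn : ∀ t ∈ Set.Ioi (0:ℝ), ∀ x ∈ Ω₀,
      deriv (fun s => u s x) t = laplacian (u t) x - lam * u t x
  sq_integrable : ∀ t : ℝ, IntegrableOn (fun x => (u t x) ^ 2) Ω₀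
  grad_sq_integrable : ∀ t : ℝ, IntegrableOn (fun x => ‖gradient (u t) x‖ ^ 2) Ω₀
  l2_bounded : ∃ C : ℝ, ∀ t : ℝ, ∫ x in Ω₀, (u t x) ^ 2 ≤ C

/-!
For a cutoff `η` supported in `Ω₀`, the weighted energy `F t = ∫ η² u(t)²` satisfies
`F' = 2 ∫ η² u Δu - 2λ F`, and integration by parts gives
`∫ η² u Δu = ∫ u² |∇η|² - ∫ |η ∇u + u ∇η|² ≤ ‖∇η‖∞² ∫_{supp η} u²`.
As `F 0 = 0`, comparison with the ODE yields `F ≤ ‖∇η‖∞² sup_t ∫_{supp η} u² / λ`.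
Choosing `η = 1` on `K_{(k-1)σ}` with support in `K_{kσ}` and `|∇η| ≤ 2/σ`, each of the
`N = ⌈λ^ν⌉` layers of width `σ = a/N` between `K_a` and `K` gains a factor
`(2N/a)²/λ ≤ e⁻¹` under the lower bound on `λ`, so `∫_K u² ≤ e^{-N} M ≤ e^{-λ^ν} M`.
-/

open Metric Set Function Filter Topology
open scoped NNReal ContDiff Convolution

theorem integrable_mul_of_continuousOn_of_tsupport_subset {X : Type*} [TopologicalSpace X]
    [MeasurableSpace X] [OpensMeasurableSpace X] {μ : Measure X} [IsFiniteMeasureOnCompacts μ]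
    {f g : X → ℝ} {U : Set X} (hU : IsOpen U) (hf : ContinuousOn f U) (hg : ContinuousOn g U)
    (hfc : HasCompactSupport f) (hfU : tsupport f ⊆ U) : Integrable (fun x => f x * g x) μ :=
  ((hf.mul hg).continuous_of_tsupport_subset hU ((tsupport_mul_subset_left).trans hfU)
    ).integrable_of_hasCompactSupport hfc.mul_right

section IntegrationByParts

variable {E : Type*} [NormedAddCommGroup E] [NormedSpace ℝ E] {f g : E → ℝ} {U : Set E}

theorem ContDiffOn.contDiff_of_tsupport_subset {n : WithTop ℕ∞} (hf : ContDiffOn ℝ n f U)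
    (hU : IsOpen U) (hfU : tsupport f ⊆ U) : ContDiff ℝ n f := by
  refine contDiff_iff_contDiffAt.2 fun x => ?_
  by_cases hx : x ∈ U
  · exact hf.contDiffAt (hU.mem_nhds hx)
  · exact contDiffAt_const.congr_of_eventuallyEq
      (notMem_tsupport_iff_eventuallyEq.1 fun h => hx (hfU h))

theorem integral_mul_fderiv_eq_neg_fderiv_mul_of_contDiffOn [MeasurableSpace E] [BorelSpace E]
    [FiniteDimensional ℝ E] {μ : Measure E} [μ.IsAddHaarMeasure] (hU : IsOpen U)
    (hf : ContDiffOn ℝ 1 f U) (hg : ContDiffOn ℝ 1 g U) (hfc : HasCompactSupport f)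
    (hfU : tsupport f ⊆ U) (v : E) :
    ∫ x, f x * fderiv ℝ g x v ∂μ = -∫ x, fderiv ℝ f x v * g x ∂μ := by
  have hf1 : ContDiff ℝ 1 f := hf.contDiff_of_tsupport_subset hU hfU
  have hfcont := hf1.continuous.continuousOn (s := U)
  have hg' : ContinuousOn (fun x => fderiv ℝ g x v) U :=
    (ContinuousLinearMap.apply ℝ ℝ v).continuous.comp_continuousOn
      (hg.continuousOn_fderiv_of_isOpen hU le_rfl)
  have hf' : Continuous (fun x => fderiv ℝ f x v) :=
    (ContinuousLinearMap.apply ℝ ℝ v).continuous.comp (hf1.continuous_fderiv one_ne_zero)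
  refine integral_mul_fderiv_eq_neg_fderiv_mul_of_integrable
    (integrable_mul_of_continuousOn_of_tsupport_subset hU hf'.continuousOn hg.continuousOn
      ((hfc.fderiv (𝕜 := ℝ)).comp_left (map_zero (ContinuousLinearMap.apply ℝ ℝ v)))
      ((tsupport_fderiv_apply_subset ℝ v).trans hfU))
    (integrable_mul_of_continuousOn_of_tsupport_subset hU hfcont hg' hfc hfU)
    (integrable_mul_of_continuousOn_of_tsupport_subset hU hfcont hg.continuousOn hfc hfU)
    (fun x _ => hf1.differentiable one_ne_zero x)
    (fun x hx => (hg.differentiableOn one_ne_zero).differentiableAt (hU.mem_nhds (hfU hx)))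

end IntegrationByParts

theorem OrthonormalBasis.sum_sq_apply_eq_norm_sq {ι F : Type*} [Fintype ι]
    [NormedAddCommGroup F] [InnerProductSpace ℝ F] [CompleteSpace F]
    (b : OrthonormalBasis ι ℝ F) (L : F →L[ℝ] ℝ) : ∑ i, L (b i) ^ 2 = ‖L‖ ^ 2 := by
  rw [← (InnerProductSpace.toDual ℝ F).symm.norm_map L, ← b.sum_sq_norm_inner_right]
  refine Finset.sum_congr rfl fun i _ => ?_
  rw [real_inner_comm, InnerProductSpace.toDual_symm_apply, Real.norm_eq_abs, sq_abs]

theorem setIntegral_sq_mul_mul_laplacian_le {m : ℕ} {Ω : Set (EuclideanSpace ℝ (Fin m))}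
    (hΩ : IsOpen Ω) {w η : EuclideanSpace ℝ (Fin m) → ℝ} (hw : ContDiffOn ℝ 1 w Ω)
    (hw' : ∀ i, ContDiffOn ℝ 1 (fun x => fderiv ℝ w x (EuclideanSpace.single i 1)) Ω)
    (hη : ContDiff ℝ 1 η) (hηc : HasCompactSupport η) (hηΩ : tsupport η ⊆ Ω) {b : ℝ}
    (hb : ∀ x, ‖fderiv ℝ η x‖ ≤ b) :
    ∫ x in tsupport η, η x ^ 2 * w x * laplacian w x ≤ b ^ 2 * ∫ x in tsupport η, w x ^ 2 := by
  set S := tsupport η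
  set e : Fin m → EuclideanSpace ℝ (Fin m) := fun i => EuclideanSpace.single i 1
  set f : EuclideanSpace ℝ (Fin m) → ℝ := fun x => η x ^ 2 * w x
  have hfη : support f ⊆ support η := fun x hx hηx => hx (by simp [f, hηx])
  have hfS : tsupport f ⊆ S := closure_mono hfη
  have hfΩ := hfS.trans hηΩ
  have hfc : HasCompactSupport f := hηc.mono hfη
  have hf : ContDiffOn ℝ 1 f Ω := (hη.contDiffOn.pow 2).mul hw
  have hDf : ∀ x ∈ Ω, ∀ v,
      fderiv ℝ f x v = η x ^ 2 * fderiv ℝ w x v + 2 * η x * fderiv ℝ η x v * w x := by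
    intro x hx v
    have hwx := (hw.differentiableOn one_ne_zero).differentiableAt (hΩ.mem_nhds hx)
    rw [(((hη.differentiable one_ne_zero x).hasFDerivAt.pow 2).fun_mul hwx.hasFDerivAt).fderiv]
    simp
    ring
  have hf1 : ContDiff ℝ 1 f := hf.contDiff_of_tsupport_subset hΩ hfΩ
  have hint : ∀ i, Integrable (fun x => fderiv ℝ f x (e i) * fderiv ℝ w x (e i)) := fun i =>
    integrable_mul_of_continuousOn_of_tsupport_subset hΩ
      ((hf1.continuous_fderiv one_ne_zero).clm_apply continuous_const).continuousOn
      ((hw.continuousOn_fderiv_of_isOpen hΩ le_rfl).clm_apply continuousOn_const)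
      (hfc.fderiv_apply (𝕜 := ℝ) (e i)) ((tsupport_fderiv_apply_subset ℝ (e i)).trans hfΩ)
  have hint' : ∀ i, Integrable
      (fun x => f x * fderiv ℝ (fun y => fderiv ℝ w y (e i)) x (e i)) := fun i =>
    integrable_mul_of_continuousOn_of_tsupport_subset hΩ hf.continuousOn
      (((hw' i).continuousOn_fderiv_of_isOpen hΩ le_rfl).clm_apply continuousOn_const) hfc hfΩ
  have hpt : ∀ x ∈ S, -∑ i, fderiv ℝ f x (e i) * fderiv ℝ w x (e i) ≤ b ^ 2 * w x ^ 2 := by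
    intro x hx
    have hsum : ∑ i, fderiv ℝ η x (e i) ^ 2 = ‖fderiv ℝ η x‖ ^ 2 := by
      simpa [EuclideanSpace.basisFun_apply] using
        (EuclideanSpace.basisFun (Fin m) ℝ).sum_sq_apply_eq_norm_sq (fderiv ℝ η x)
    have hb2 : ‖fderiv ℝ η x‖ ^ 2 ≤ b ^ 2 := pow_le_pow_left₀ (norm_nonneg _) (hb x) 2
    calc -∑ i, fderiv ℝ f x (e i) * fderiv ℝ w x (e i)
        = w x ^ 2 * ∑ i, fderiv ℝ η x (e i) ^ 2
          - ∑ i, (η x * fderiv ℝ w x (e i) + w x * fderiv ℝ η x (e i)) ^ 2 := by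
          simp only [hDf x (hηΩ hx), Finset.mul_sum, ← Finset.sum_sub_distrib,
            ← Finset.sum_neg_distrib]
          exact Finset.sum_congr rfl fun i _ => by ring
      _ ≤ b ^ 2 * w x ^ 2 := by
          rw [hsum]
          nlinarith [Finset.sum_nonneg fun i (_ : i ∈ Finset.univ) =>
            sq_nonneg (η x * fderiv ℝ w x (e i) + w x * fderiv ℝ η x (e i)), sq_nonneg (w x)]
  calc ∫ x in S, η x ^ 2 * w x * laplacian w x
      = ∫ x, f x * laplacian w x :=
        setIntegral_eq_integral_of_forall_compl_eq_zero fun x hx => by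
          simp [image_eq_zero_of_notMem_tsupport hx]
    _ = ∑ i, ∫ x, f x * fderiv ℝ (fun y => fderiv ℝ w y (e i)) x (e i) := by
        simp only [laplacian, Finset.mul_sum]
        exact integral_finsetSum _ fun i _ => hint' i
    _ = ∑ i, -∫ x, fderiv ℝ f x (e i) * fderiv ℝ w x (e i) := Finset.sum_congr rfl fun i _ =>
        integral_mul_fderiv_eq_neg_fderiv_mul_of_contDiffOn hΩ hf (hw' i) hfc hfΩ (e i)
    _ = ∫ x in S, -∑ i, fderiv ℝ f x (e i) * fderiv ℝ w x (e i) := by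
        rw [setIntegral_eq_integral_of_forall_compl_eq_zero fun x hx => by
          simp [fderiv_of_notMem_tsupport (𝕜 := ℝ) fun h => hx (hfS h)], integral_neg,
          integral_finsetSum _ fun i _ => hint i, Finset.sum_neg_distrib]
    _ ≤ ∫ x in S, b ^ 2 * w x ^ 2 :=
        setIntegral_mono_on (integrable_finsetSum _ fun i _ => hint i).neg.integrableOn
          (ContinuousOn.integrableOn_compact hηc (f := fun x => b ^ 2 * w x ^ 2)
            (continuousOn_const.mul ((hw.continuousOn.mono hηΩ).pow 2)))
          (isClosed_tsupport η).measurableSet hpt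
    _ = b ^ 2 * ∫ x in S, w x ^ 2 := integral_const_mul _ _

section Cutoff

variable {E : Type*} [NormedAddCommGroup E] [NormedSpace ℝ E] [FiniteDimensional ℝ E]

theorem ContDiffBump.lipschitzWith_normed_convolution [MeasurableSpace E] [BorelSpace E]
    {μ : Measure E} [μ.IsAddHaarMeasure] (φ : ContDiffBump (0 : E)) {g : E → ℝ} {K : ℝ≥0}
    (hg : LipschitzWith K g) :
    LipschitzWith K (φ.normed μ ⋆[ContinuousLinearMap.lsmul ℝ ℝ, μ] g) := by
  have hint : ∀ z, Integrable (fun t => φ.normed μ t * g (z - t)) μ := fun z =>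
    (φ.continuous_normed.mul (hg.continuous.comp (continuous_const.sub continuous_id))
      ).integrable_of_hasCompactSupport φ.hasCompactSupport_normed.mul_right
  refine LipschitzWith.of_dist_le_mul fun x y => ?_
  simp only [Real.dist_eq, convolution_def, ContinuousLinearMap.lsmul_apply, smul_eq_mul]
  rw [← integral_sub (hint x) (hint y)]
  calc ‖∫ t, (φ.normed μ t * g (x - t) - φ.normed μ t * g (y - t)) ∂μ‖
      ≤ ∫ t, φ.normed μ t * (K * dist x y) ∂μ := by
        refine norm_integral_le_of_norm_le (φ.integrable_normed.mul_const _)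
          (ae_of_all _ fun t => ?_)
        rw [← mul_sub, norm_mul, Real.norm_of_nonneg (φ.nonneg_normed t), ← dist_sub_right x y t]
        exact mul_le_mul_of_nonneg_left (hg.dist_le_mul _ _) (φ.nonneg_normed t)
    _ = K * dist x y := by rw [integral_mul_const, φ.integral_normed, one_mul]

theorem exists_contDiff_cutoff_cthickening (C : Set E) {σ : ℝ} (hσ : 0 < σ) :
    ∃ η : E → ℝ, ContDiff ℝ ∞ η ∧ EqOn η 1 C ∧ tsupport η ⊆ cthickening σ C ∧
      ∀ x, ‖fderiv ℝ η x‖ ≤ 2 / σ := by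
  rcases C.eq_empty_or_nonempty with rfl | hC
  · exact ⟨0, contDiff_const, eqOn_empty _ _, by simp, fun x => by simp; positivity⟩
  borelize E
  -- the margins `σ/4`, `3σ/4` of this profile absorb the mollification at scale `σ/8`
  set g : E → ℝ := fun x => max 0 (min 1 (3 / 2 - 2 / σ * infDist x C))
  have hg : LipschitzWith (Real.toNNReal (2 / σ)) g := by
    have haff : LipschitzWith (Real.toNNReal (2 / σ)) fun s : ℝ => 3 / 2 - 2 / σ * s :=
      LipschitzWith.of_dist_le_mul fun s s' => by
        rw [Real.coe_toNNReal _ (by positivity), Real.dist_eq, Real.dist_eq,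
          show 3 / 2 - 2 / σ * s - (3 / 2 - 2 / σ * s') = 2 / σ * (s' - s) by ring, abs_mul,
          abs_of_pos (by positivity), abs_sub_comm]
    simpa using ((haff.comp (lipschitz_infDist_pt C)).const_min 1).const_max 0
  have hg_one : ∀ x, infDist x C ≤ σ / 4 → g x = 1 := fun x hx => by
    have : 1 ≤ 3 / 2 - 2 / σ * infDist x C := by
      rw [div_mul_eq_mul_div, le_sub_iff_add_le, ← le_sub_iff_add_le', div_le_iff₀ hσ]
      linarith
    simp [g, min_eq_left this]
  have hg_zero : ∀ x, 3 * σ / 4 ≤ infDist x C → g x = 0 := fun x hx => by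
    have : 3 / 2 - 2 / σ * infDist x C ≤ 0 := by
      rw [sub_nonpos, div_mul_eq_mul_div, le_div_iff₀ hσ]
      linarith
    simp [g, min_eq_right (this.trans zero_le_one), this]
  let φ : ContDiffBump (0 : E) := ⟨σ / 16, σ / 8, by positivity, by linarith⟩
  set η := φ.normed Measure.addHaar ⋆[ContinuousLinearMap.lsmul ℝ ℝ, Measure.addHaar] g
  have hη_eq : ∀ x, (∀ y ∈ ball x (σ / 8), g y = g x) → η x = g x := fun x h =>
    φ.normed_convolution_eq_right h
  refine ⟨η, φ.hasCompactSupport_normed.contDiff_convolution_left _ φ.contDiff_normed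
    hg.continuous.locallyIntegrable, fun x hx => ?_, closure_minimal (fun x hx => ?_)
    isClosed_cthickening, fun x => ?_⟩
  · have hgx : ∀ y ∈ ball x (σ / 8), g y = 1 := fun y hy =>
      hg_one y ((infDist_le_dist_of_mem hx).trans (by rw [mem_ball] at hy; linarith))
    rw [hη_eq x fun y hy => by rw [hgx y hy, hgx x (mem_ball_self (by positivity))],
      hgx x (mem_ball_self (by positivity))]
    rfl
  · by_contra hxC
    have hfar : σ ≤ infDist x C := by
      by_contra! h
      obtain ⟨y, hy, hxy⟩ := (infDist_lt_iff hC).1 h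
      exact hxC (mem_cthickening_of_dist_le x y σ C hy hxy.le)
    have hgx : ∀ y ∈ ball x (σ / 8), g y = 0 := fun y hy => hg_zero y (by
      have := infDist_le_infDist_add_dist (x := x) (y := y) (s := C)
      rw [mem_ball, dist_comm] at hy
      linarith)
    exact hx (by
      rw [hη_eq x fun y hy => by rw [hgx y hy, hgx x (mem_ball_self (by positivity))],
        hgx x (mem_ball_self (by positivity))])
  · simpa [Real.coe_toNNReal _ (show (0 : ℝ) ≤ 2 / σ by positivity)] using
      norm_fderiv_le_of_lipschitz ℝ (φ.lipschitzWith_normed_convolution hg) (x₀ := x)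

end Cutoff

theorem le_of_hasDerivAt_le_mul_sub {F F' : ℝ → ℝ} {a b k c : ℝ} (hab : a ≤ b)
    (hF : ContinuousOn F (Icc a b)) (hF' : ∀ t ∈ Ioo a b, HasDerivAt F (F' t) t)
    (hF'le : ∀ t ∈ Ioo a b, F' t ≤ k * (c - F t)) (ha : F a ≤ c) : F b ≤ c := by
  have hanti : AntitoneOn (fun t => Real.exp (k * t) * (F t - c)) (Icc a b) := by
    refine antitoneOn_of_hasDerivWithinAt_nonpos (convex_Icc a b)
      ((Real.continuous_exp.comp (continuous_const.mul continuous_id)).continuousOn.mul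
        (hF.sub continuousOn_const))
      (fun t ht => ?_) (f' := fun t => Real.exp (k * t) * k * (F t - c)
        + Real.exp (k * t) * F' t) fun t ht => ?_
    · rw [interior_Icc] at ht
      exact ((((hasDerivAt_id t).const_mul k).exp.congr_deriv (by simp)).mul
        ((hF' t ht).sub_const c)).hasDerivWithinAt
    · rw [interior_Icc] at ht
      have := mul_le_mul_of_nonneg_left (hF'le t ht) (Real.exp_pos (k * t)).le
      linarith
  have hb : Real.exp (k * b) * (F b - c) ≤ 0 :=
    (hanti (left_mem_Icc.2 hab) (right_mem_Icc.2 hab) hab).trans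
      (mul_nonpos_of_nonneg_of_nonpos (Real.exp_pos _).le (sub_nonpos.2 ha))
  exact sub_nonpos.1 (nonpos_of_mul_nonpos_right hb (Real.exp_pos _))

section ParametricIntegral

variable {X : Type*} [TopologicalSpace X] [T2Space X] [MeasurableSpace X]
  [OpensMeasurableSpace X] {μ : Measure X} [IsFiniteMeasureOnCompacts μ] {S : Set X}

theorem continuousOn_setIntegral_of_continuousOn {f : ℝ → X → ℝ} {I : Set ℝ} (hI : IsClosed I)
    (hS : IsCompact S) (hf : ContinuousOn (uncurry f) (I ×ˢ S)) :
    ContinuousOn (fun t => ∫ x in S, f t x ∂μ) I := by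
  intro t₀ ht₀
  obtain ⟨C, hC⟩ := ((isCompact_Icc.inter_left hI).prod hS).exists_bound_of_continuousOn
    (hf.mono (prod_mono (inter_subset_left (t := Icc (t₀ - 1) (t₀ + 1))) subset_rfl))
  have hIcc : Icc (t₀ - 1) (t₀ + 1) ∈ 𝓝[I] t₀ :=
    nhdsWithin_le_nhds (Icc_mem_nhds (by linarith) (by linarith))
  refine continuousWithinAt_of_dominated (bound := fun _ => C) ?_ ?_
    (integrableOn_const hS.measure_ne_top) ?_
  · filter_upwards [self_mem_nhdsWithin] with t ht
    exact (hf.uncurry_left _ ht).aestronglyMeasurable hS.measurableSet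
  · filter_upwards [self_mem_nhdsWithin, hIcc] with t ht ht'
    exact (ae_restrict_iff' hS.measurableSet).2
      (ae_of_all _ fun x hx => hC (t, x) ⟨⟨ht, ht'⟩, hx⟩)
  · refine (ae_restrict_iff' hS.measurableSet).2 (ae_of_all _ fun x hx => ?_)
    exact (hf (t₀, x) ⟨ht₀, hx⟩).comp (f := fun t => (t, x))
      (continuous_id.prodMk continuous_const).continuousWithinAt fun t ht => ⟨ht, hx⟩

theorem hasDerivAt_setIntegral_of_continuousOn {f f' : ℝ → X → ℝ} {U : Set ℝ} (hU : IsOpen U)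
    (hS : IsCompact S) (hf : ContinuousOn (uncurry f) (U ×ˢ S))
    (hf' : ContinuousOn (uncurry f') (U ×ˢ S))
    (hderiv : ∀ t ∈ U, ∀ x ∈ S, HasDerivAt (f · x) (f' t x) t) {t₀ : ℝ} (ht₀ : t₀ ∈ U) :
    HasDerivAt (fun t => ∫ x in S, f t x ∂μ) (∫ x in S, f' t₀ x ∂μ) t₀ := by
  obtain ⟨ε, hε, hεU⟩ := nhds_basis_closedBall.mem_iff.1 (hU.mem_nhds ht₀)
  obtain ⟨C, hC⟩ := ((isCompact_closedBall t₀ ε).prod hS).exists_bound_of_continuousOn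
    (hf'.mono (prod_mono hεU subset_rfl))
  refine (hasDerivAt_integral_of_dominated_loc_of_deriv_le (bound := fun _ => C)
    (ball_mem_nhds t₀ hε) ?_ ((hf.uncurry_left _ ht₀).integrableOn_compact hS)
    ((hf'.uncurry_left _ ht₀).aestronglyMeasurable hS.measurableSet) ?_
    (integrableOn_const hS.measure_ne_top) ?_).2
  · filter_upwards [hU.mem_nhds ht₀] with t ht
    exact (hf.uncurry_left _ ht).aestronglyMeasurable hS.measurableSet
  · refine (ae_restrict_iff' hS.measurableSet).2 (ae_of_all _ fun x hx t ht => ?_)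
    exact hC (t, x) ⟨ball_subset_closedBall ht, hx⟩
  · refine (ae_restrict_iff' hS.measurableSet).2 (ae_of_all _ fun x hx t ht => ?_)
    exact hderiv t (hεU (ball_subset_closedBall ht)) x hx

end ParametricIntegral

namespace IsClassicalSolution

variable {m : ℕ} {Ω₀ : Set (EuclideanSpace ℝ (Fin m))} {lam : ℝ}
  {u : ℝ → EuclideanSpace ℝ (Fin m) → ℝ}

theorem contDiffOn_slice (hu : IsClassicalSolution Ω₀ lam u) (hΩ₀ : IsOpen Ω₀) {t : ℝ}
    (ht : 0 < t) : ContDiffOn ℝ 1 (u t) Ω₀ := by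
  rw [show (1 : WithTop ℕ∞) = 0 + 1 from rfl, contDiffOn_succ_iff_fderiv_of_isOpen hΩ₀]
  exact ⟨fun x hx => (hu.diff_x t ht x hx).differentiableWithinAt, by simp,
    contDiffOn_zero.2 (hu.cont_grad.uncurry_left (f := fun t x => fderiv ℝ (u t) x) t ht)⟩

theorem contDiffOn_fderiv_apply (hu : IsClassicalSolution Ω₀ lam u) (hΩ₀ : IsOpen Ω₀) {t : ℝ}
    (ht : 0 < t) (v : EuclideanSpace ℝ (Fin m)) :
    ContDiffOn ℝ 1 (fun x => fderiv ℝ (u t) x v) Ω₀ := by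
  have hD : ∀ x ∈ Ω₀, HasFDerivAt (fun y => fderiv ℝ (u t) y v)
      ((ContinuousLinearMap.apply ℝ ℝ v).comp (fderiv ℝ (fun y => fderiv ℝ (u t) y) x)) x :=
    fun x hx => (ContinuousLinearMap.apply ℝ ℝ v).hasFDerivAt.comp x
      (hu.diff_xx t ht x hx).hasFDerivAt
  rw [show (1 : WithTop ℕ∞) = 0 + 1 from rfl, contDiffOn_succ_iff_fderiv_of_isOpen hΩ₀]
  refine ⟨fun x hx => (hD x hx).differentiableAt.differentiableWithinAt, by simp,
    contDiffOn_zero.2 ?_⟩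
  exact (continuousOn_const.clm_comp (hu.cont_hess.uncurry_left
    (f := fun t x => fderiv ℝ (fun y => fderiv ℝ (u t) y) x) t ht)).congr
    fun x hx => (hD x hx).fderiv

theorem continuousOn_laplacian (hu : IsClassicalSolution Ω₀ lam u) (hΩ₀ : IsOpen Ω₀) {t : ℝ}
    (ht : 0 < t) : ContinuousOn (laplacian (u t)) Ω₀ :=
  continuousOn_finsetSum _ fun _ _ =>
    ((hu.contDiffOn_fderiv_apply hΩ₀ ht _).continuousOn_fderiv_of_isOpen hΩ₀ le_rfl).clm_apply
      continuousOn_const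

theorem setIntegral_sq_mul_sq_le (hu : IsClassicalSolution Ω₀ lam u) (hΩ₀ : IsOpen Ω₀)
    (hlam : 0 < lam) (h0 : ∀ x ∈ Ω₀, u 0 x = 0) {η : EuclideanSpace ℝ (Fin m) → ℝ}
    (hη : ContDiff ℝ 1 η) (hηc : HasCompactSupport η) (hηΩ : tsupport η ⊆ Ω₀) {b : ℝ}
    (hb : ∀ x, ‖fderiv ℝ η x‖ ≤ b) {Q : ℝ}
    (hQ : ∀ t, 0 ≤ t → ∫ x in tsupport η, u t x ^ 2 ≤ Q) {t : ℝ} (ht : 0 ≤ t) :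
    ∫ x in tsupport η, η x ^ 2 * u t x ^ 2 ≤ b ^ 2 * Q / lam := by
  set S := tsupport η
  have hS : IsCompact S := hηc
  have hSm : MeasurableSet S := (isClosed_tsupport η).measurableSet
  have hcont : ContinuousOn
      (fun p : ℝ × EuclideanSpace ℝ (Fin m) => η p.2 ^ 2 * u p.1 p.2 ^ 2) (Ici 0 ×ˢ S) :=
    ((hη.continuous.comp continuous_snd).pow 2).continuousOn.mul
      ((hu.cont.mono (prod_mono subset_rfl hηΩ)).pow 2)
  have hcont' : ContinuousOn (fun p : ℝ × EuclideanSpace ℝ (Fin m) =>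
      2 * η p.2 ^ 2 * u p.1 p.2 * deriv (fun s => u s p.2) p.1) (Ioi 0 ×ˢ S) :=
    ((continuous_const.mul ((hη.continuous.comp continuous_snd).pow 2)).continuousOn.mul
      (hu.cont.mono (prod_mono Ioi_subset_Ici_self hηΩ))).mul
      (hu.cont_dt.mono (prod_mono subset_rfl hηΩ))
  have hderiv : ∀ s ∈ Ioi (0 : ℝ), HasDerivAt (fun s => ∫ x in S, η x ^ 2 * u s x ^ 2)
      (∫ x in S, 2 * η x ^ 2 * u s x * deriv (fun r => u r x) s) s :=
    fun s hs => hasDerivAt_setIntegral_of_continuousOn (f := fun s x => η x ^ 2 * u s x ^ 2)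
      (f' := fun s x => 2 * η x ^ 2 * u s x * deriv (fun r => u r x) s) isOpen_Ioi hS
      (hcont.mono (prod_mono Ioi_subset_Ici_self subset_rfl)) hcont'
      (fun r hr x hx => (((hu.diff_t r hr x (hηΩ hx)).hasDerivAt.pow 2).const_mul (η x ^ 2)
        ).congr_deriv (by ring)) hs
  have hdecay : ∀ s ∈ Ioi (0 : ℝ), ∫ x in S, 2 * η x ^ 2 * u s x * deriv (fun r => u r x) s
      ≤ 2 * lam * (b ^ 2 * Q / lam - ∫ x in S, η x ^ 2 * u s x ^ 2) := by
    intro s hs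
    have hcacc := setIntegral_sq_mul_mul_laplacian_le hΩ₀ (hu.contDiffOn_slice hΩ₀ hs)
      (fun i => hu.contDiffOn_fderiv_apply hΩ₀ hs _) hη hηc hηΩ hb
    have hlapS : IntegrableOn (fun x => η x ^ 2 * u s x * laplacian (u s) x) S :=
      ((((hη.continuous.pow 2).continuousOn.mul (hu.contDiffOn_slice hΩ₀ hs).continuousOn).mul
        (hu.continuousOn_laplacian hΩ₀ hs)).mono hηΩ
        ).integrableOn_compact hS
    have hsqS : IntegrableOn (fun x => η x ^ 2 * u s x ^ 2) S :=
      (hcont.uncurry_left (f := fun s x => η x ^ 2 * u s x ^ 2) s (Ioi_subset_Ici_self hs)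
        ).integrableOn_compact hS
    rw [setIntegral_congr_fun hSm (g := fun x => 2 * (η x ^ 2 * u s x * laplacian (u s) x)
        - 2 * lam * (η x ^ 2 * u s x ^ 2)) fun x hx => by
          simp only [hu.eqn s hs x (hηΩ hx)]; ring,
      integral_sub (hlapS.const_mul 2) (hsqS.const_mul _), integral_const_mul,
      integral_const_mul, mul_sub, show 2 * lam * (b ^ 2 * Q / lam) = 2 * (b ^ 2 * Q) by
        field_simp]
    linarith [mul_le_mul_of_nonneg_left (hQ s (le_of_lt hs)) (sq_nonneg b)]
  have hQ0 : 0 ≤ Q := (setIntegral_nonneg hSm fun x _ => sq_nonneg _).trans (hQ 0 le_rfl)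
  have hF0 : ∫ x in S, η x ^ 2 * u 0 x ^ 2 = 0 :=
    setIntegral_eq_zero_of_forall_eq_zero fun x hx => by simp [h0 x (hηΩ hx)]
  refine le_of_hasDerivAt_le_mul_sub ht
    ((continuousOn_setIntegral_of_continuousOn (f := fun s x => η x ^ 2 * u s x ^ 2)
      isClosed_Ici hS hcont).mono Icc_subset_Ici_self)
    (fun s hs => hderiv s hs.1) (fun s hs => hdecay s hs.1) (by rw [hF0]; positivity)

theorem setIntegral_sq_le_of_cthickening (hu : IsClassicalSolution Ω₀ lam u)
    (hΩ₀ : IsOpen Ω₀) (hlam : 0 < lam) (h0 : ∀ x ∈ Ω₀, u 0 x = 0)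
    {C : Set (EuclideanSpace ℝ (Fin m))} (hC : IsCompact C) {σ : ℝ} (hσ : 0 < σ)
    (hCΩ : cthickening σ C ⊆ Ω₀) {Q : ℝ}
    (hQ : ∀ t, 0 ≤ t → ∫ x in cthickening σ C, u t x ^ 2 ≤ Q) {t : ℝ} (ht : 0 ≤ t) :
    ∫ x in C, u t x ^ 2 ≤ (2 / σ) ^ 2 * Q / lam := by
  obtain ⟨η, hη, hη1, hησ, hηb⟩ := exists_contDiff_cutoff_cthickening C hσ
  have hηc : HasCompactSupport η :=
    hC.cthickening.of_isClosed_subset (isClosed_tsupport η) hησ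
  have hCη : C ⊆ tsupport η := fun x hx => subset_tsupport η (by simp [hη1 hx])
  have hut : ContinuousOn (u t) Ω₀ := hu.cont.uncurry_left (f := u) t ht
  calc ∫ x in C, u t x ^ 2 = ∫ x in C, η x ^ 2 * u t x ^ 2 :=
        setIntegral_congr_fun hC.measurableSet fun x hx => by simp [hη1 hx]
    _ ≤ ∫ x in tsupport η, η x ^ 2 * u t x ^ 2 :=
        setIntegral_mono_set (((hη.continuous.pow 2).continuousOn.mul
          ((hut.mono (hησ.trans hCΩ)).pow 2)).integrableOn_compact hηc)
          (ae_of_all _ fun x => by positivity) hCη.eventuallyLE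
    _ ≤ (2 / σ) ^ 2 * Q / lam :=
        hu.setIntegral_sq_mul_sq_le hΩ₀ hlam h0 (hη.of_le (by simp)) hηc (hησ.trans hCΩ)
          hηb
          (fun s hs => (setIntegral_mono_set ((hu.sq_integrable s).mono_set hCΩ)
            (ae_of_all _ fun x => sq_nonneg _) hησ.eventuallyLE).trans (hQ s hs)) ht

theorem setIntegral_sq_le_pow (hu : IsClassicalSolution Ω₀ lam u) (hΩ₀ : IsOpen Ω₀)
    (hlam : 0 < lam) (h0 : ∀ x ∈ Ω₀, u 0 x = 0) {σ : ℝ} (hσ : 0 < σ) {M : ℝ}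
    (hM : ∀ t, 0 ≤ t → ∫ x in Ω₀, u t x ^ 2 ≤ M) (n : ℕ) {K : Set (EuclideanSpace ℝ (Fin m))}
    (hK : IsCompact K) (hKΩ : cthickening (n * σ) K ⊆ Ω₀) {t : ℝ} (ht : 0 ≤ t) :
    ∫ x in K, u t x ^ 2 ≤ ((2 / σ) ^ 2 / lam) ^ n * M := by
  induction n generalizing K t with
  | zero =>
    have hKΩ' : K ⊆ Ω₀ := subset_closure.trans (by simpa using hKΩ)
    simpa using (setIntegral_mono_set (hu.sq_integrable t) (ae_of_all _ fun x => sq_nonneg _)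
      hKΩ'.eventuallyLE).trans (hM t ht)
  | succ n ih =>
    have hn : cthickening (n * σ + σ) K ⊆ Ω₀ := by rwa [Nat.cast_succ, add_one_mul] at hKΩ
    calc ∫ x in K, u t x ^ 2 ≤ (2 / σ) ^ 2 * (((2 / σ) ^ 2 / lam) ^ n * M) / lam :=
          hu.setIntegral_sq_le_of_cthickening hΩ₀ hlam h0 hK hσ
            ((cthickening_mono (by nlinarith [n.cast_nonneg (α := ℝ)]) K).trans hn)
            (fun s hs => ih hK.cthickening
              ((cthickening_cthickening_subset (by positivity) hσ.le K).trans hn) hs) ht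
      _ = ((2 / σ) ^ 2 / lam) ^ (n + 1) * M := by ring

end IsClassicalSolution

theorem div_sq_div_le_exp_neg_one {a γ ν lam : ℝ} (ha : 0 < a) (hγ0 : 0 < γ) (hγ1 : γ < 1)
    (hν0 : 0 < ν) (hν : ν < 1 / 2)
    (hlam : max 1 ((16 * Real.exp 1 / (γ ^ 2 * a ^ 2)) ^ (1 / (1 - 2 * ν))) ≤ lam) :
    (2 / (a / ⌈lam ^ ν⌉₊)) ^ 2 / lam ≤ Real.exp (-1) := by
  obtain ⟨hlam1, hlamc⟩ := max_le_iff.1 hlam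
  have hlam0 : 0 < lam := one_pos.trans_le hlam1
  set y := lam ^ ν
  set X := lam ^ (1 - 2 * ν)
  have hy1 : 1 ≤ y := Real.one_le_rpow hlam1 hν0.le
  have hN : (⌈y⌉₊ : ℝ) ≤ 2 * y := by linarith [Nat.ceil_lt_add_one (zero_le_one.trans hy1)]
  have hlamyX : lam = y ^ 2 * X := by
    rw [← Real.rpow_natCast, ← Real.rpow_mul hlam0.le, ← Real.rpow_add hlam0,
      show ν * (2 : ℕ) + (1 - 2 * ν) = 1 by push_cast; ring, Real.rpow_one]
  have hX : 16 * Real.exp 1 / a ^ 2 ≤ X := by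
    have hc0 : 0 ≤ 16 * Real.exp 1 / (γ ^ 2 * a ^ 2) := by positivity
    have := Real.rpow_le_rpow (by positivity) hlamc (by linarith : (0 : ℝ) ≤ 1 - 2 * ν)
    rw [← Real.rpow_mul hc0, one_div_mul_cancel (by linarith), Real.rpow_one] at this
    refine le_trans (div_le_div_of_nonneg_left (by positivity) (by positivity) ?_) this
    nlinarith [pow_le_one₀ hγ0.le hγ1.le (n := 2), pow_pos ha 2]
  calc (2 / (a / ⌈y⌉₊)) ^ 2 / lam = (2 * ⌈y⌉₊) ^ 2 / a ^ 2 / (y ^ 2 * X) := by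
        rw [hlamyX]; field_simp
    _ ≤ (2 * (2 * y)) ^ 2 / a ^ 2 / (y ^ 2 * X) := by gcongr
    _ = (16 * Real.exp 1 / a ^ 2) / X * (Real.exp 1)⁻¹ := by
        field_simp
        norm_num
    _ ≤ Real.exp (-1) := by
        rw [Real.exp_neg]
        exact mul_le_of_le_one_left (by positivity) ((div_le_one (by positivity)).2 hX)

theorem subexponential_decay_Linfty_general {m : ℕ}
    (Ω₀ : Set (EuclideanSpace ℝ (Fin m))) (hΩ₀ : IsOpen Ω₀)
    (K : Set (EuclideanSpace ℝ (Fin m))) (hK : IsCompact K)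
    (a : ℝ) (ha : 0 < a) (hKa : Metric.cthickening a K ⊆ Ω₀)
    (γ ν : ℝ) (hγ0 : 0 < γ) (hγ1 : γ < 1) (hν0 : 0 < ν) (hν : ν < 1 / 2)
    (lam : ℝ)
    (hlam : max 1 ((16 * Real.exp 1 / (γ ^ 2 * a ^ 2)) ^ (1 / (1 - 2 * ν))) ≤ lam)
    (u : ℝ → EuclideanSpace ℝ (Fin m) → ℝ) (hu : IsClassicalSolution Ω₀ lam u)
    (h0 : ∀ x ∈ Ω₀, u 0 x = 0)
    (M : ℝ) (hM : ∀ t : ℝ, 0 ≤ t → ∫ x in Ω₀, (u t x) ^ 2 ≤ M) :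
    ∀ t : ℝ, 0 ≤ t → ∫ x in K, (u t x) ^ 2 ≤ Real.exp (-lam ^ ν) * M := by
  intro t ht
  have hlam0 : 0 < lam := one_pos.trans_le ((le_max_left _ _).trans hlam)
  set N := ⌈lam ^ ν⌉₊
  have hN : (0 : ℝ) < N := Nat.cast_pos.2 (Nat.ceil_pos.2 (Real.rpow_pos_of_pos hlam0 ν))
  have hM0 : 0 ≤ M :=
    (setIntegral_nonneg hΩ₀.measurableSet fun x _ => sq_nonneg _).trans (hM 0 le_rfl)
  calc ∫ x in K, u t x ^ 2 ≤ ((2 / (a / N)) ^ 2 / lam) ^ N * M :=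
        hu.setIntegral_sq_le_pow hΩ₀ hlam0 h0 (by positivity) hM N hK
          (by rwa [mul_div_cancel₀ _ hN.ne']) ht
    _ ≤ Real.exp (-1) ^ N * M := by
        gcongr
        exact div_sq_div_le_exp_neg_one ha hγ0 hγ1 hν0 hν hlam
    _ ≤ Real.exp (-lam ^ ν) * M := by
        rw [← Real.exp_nat_mul, mul_neg_one]
        gcongr
        exact Nat.le_ceil _

/-- **Sub-exponential decay in the obstacle, L∞-in-time form (Theorem 1 of the paper,
PDE-interior form).**  Let `u` solve `∂ₜu = Δu − λu` on `(0,∞) × Ω₀` with `λ > 0` and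
`u(0,·) = 0` on `Ω₀`, and let `M` bound `∫_{Ω₀} u(t)²` for all `t ≥ 0`. Let `K ⊆ Ω₀` be
compact, `a > 0` with the closed `a`-neighbourhood `K_a ⊆ Ω₀`, and `0 < γ < 1`,
`0 < ν < 1/2`. Then for every `λ ≥ max(1, (16e/(γ²a²))^{1/(1−2ν)})`,
`sup_{t ≥ 0} ∫_K u(t)² ≤ e^{−λ^ν} M`. -/
theorem subexponential_decay_Linfty {m : ℕ} (hm : 1 ≤ m)
    (Ω₀ : Set (EuclideanSpace ℝ (Fin m))) (hΩ₀ : IsOpen Ω₀)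
    (K : Set (EuclideanSpace ℝ (Fin m))) (hK : IsCompact K)
    (a : ℝ) (ha : 0 < a) (hKa : Metric.cthickening a K ⊆ Ω₀)
    (γ ν : ℝ) (hγ0 : 0 < γ) (hγ1 : γ < 1) (hν0 : 0 < ν) (hν : ν < 1 / 2)
    (lam : ℝ)
    (hlam : max 1 ((16 * Real.exp 1 / (γ ^ 2 * a ^ 2)) ^ (1 / (1 - 2 * ν))) ≤ lam)
    (u : ℝ → EuclideanSpace ℝ (Fin m) → ℝ) (hu : IsClassicalSolution Ω₀ lam u)
    (h0 : ∀ x ∈ Ω₀, u 0 x = 0)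
    (M : ℝ) (hM : ∀ t : ℝ, 0 ≤ t → ∫ x in Ω₀, (u t x) ^ 2 ≤ M) :
    ∀ t : ℝ, 0 ≤ t → ∫ x in K, (u t x) ^ 2 ≤ Real.exp (-lam ^ ν) * M :=
  subexponential_decay_Linfty_general Ω₀ hΩ₀ K hK a ha hKa γ ν hγ0 hγ1 hν0 hν lam hlam u hu h0 M hM
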